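/- For n ≥ 3 and 2 ≤ i ≤ n, let σ_i ∈ SL(n,ℤ) be the linear map sending e₁ ↦ -e_i, e_i ↦ e₁, and e_j ↦ e_j for j ∉ {1,i}, and let α_i ∈ SL(n,ℤ) send e₁ ↦ e₁ + 2e_i, e_i ↦ e₁ + 3e_i, and e_j ↦ e_j for j ∉ {1,i}. If A ∈ GL(n,ℤ) satisfies A(e_i) = ±e_i for all 2 ≤ i ≤ n and α_j A α_j⁻¹(e₁) = ±e₁ for all 2 ≤ j ≤ n, then A = I or A = -I. -/

import Mathlib

open Matrix

/-- The matrix of `σ_i : e₁ ↦ -e_i, e_i ↦ e₁, e_j ↦ e_j (j ∉ {1,i})`,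
where `z` is the index of the first basis vector. -/
def sigMat (n : ℕ) (z i : Fin n) : Matrix (Fin n) (Fin n) ℤ :=
  Matrix.of fun a b =>
    if a = i ∧ b = z then -1
    else if a = z ∧ b = i then 1
    else if a = b ∧ a ≠ z ∧ a ≠ i then 1 else 0

/-- The matrix of `α_i : e₁ ↦ e₁ + 2e_i, e_i ↦ e₁ + 3e_i, e_j ↦ e_j (j ∉ {1,i})`,
where `z` is the index of the first basis vector. -/
def alphaMat (n : ℕ) (z i : Fin n) : Matrix (Fin n) (Fin n) ℤ :=
  Matrix.of fun a b =>
    if a = z ∧ b = z then 1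
    else if a = i ∧ b = z then 2
    else if a = z ∧ b = i then 1
    else if a = i ∧ b = i then 3
    else if a = b then 1 else 0

/-!
`A` preserves each line `ℤ eᵢ` (`i ≠ 1`) with a sign `εᵢ`, and the hypothesis on `α_j` says that
`A` preserves the line through `α_j⁻¹ e₁ = 3e₁ - 2e_j` with a sign `δ_j`. Hence
`3 A e₁ = 3δ_j e₁ + 2(ε_j - δ_j) e_j`; as `3 ∤ 4`, the `e_j`-coordinate forces `ε_j = δ_j`, and then
`A e₁ = δ_j e₁`. So all the signs agree and `A = ±I`. The determinants are computed by writing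
`σᵢ` and `αᵢ` as products of elementary transvections.
-/

theorem exists_units_smul_of_eq_or_eq_neg {V : Type*} [AddCommGroup V] {x v : V}
    (h : x = v ∨ x = -v) : ∃ δ : ℤˣ, x = δ • v := by
  rcases h with rfl | rfl
  · exact ⟨1, (one_smul _ _).symm⟩
  · exact ⟨-1, by rw [Units.neg_smul, one_smul]⟩

theorem Matrix.mulVec_inv_mulVec_eq_smul_of_conj {ι R : Type*} [Fintype ι] [DecidableEq ι]
    [CommRing R] {P B : Matrix ι ι R} (hP : IsUnit P.det) {v : ι → R} {c : R}
    (h : (P * B * P⁻¹) *ᵥ v = c • v) : B *ᵥ (P⁻¹ *ᵥ v) = c • (P⁻¹ *ᵥ v) := by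
  calc B *ᵥ (P⁻¹ *ᵥ v) = P⁻¹ *ᵥ ((P * B * P⁻¹) *ᵥ v) := by
        rw [mulVec_mulVec, mulVec_mulVec, ← mul_assoc, ← mul_assoc, nonsing_inv_mul _ hP, one_mul]
    _ = c • (P⁻¹ *ᵥ v) := by rw [h, mulVec_smul]

theorem Matrix.mulVec_single_eq_of_mulVec_three_smul_sub_two_smul {ι : Type*} [Fintype ι]
    [DecidableEq ι] {B : Matrix ι ι ℤ} {z j : ι} (hzj : z ≠ j) {ε δ : ℤˣ}
    (hj : B *ᵥ Pi.single j 1 = ε • Pi.single j 1)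
    (hw : B *ᵥ ((3 : ℤ) • Pi.single z 1 - (2 : ℤ) • Pi.single j 1) =
      δ • ((3 : ℤ) • Pi.single z 1 - (2 : ℤ) • Pi.single j 1)) :
    ε = δ ∧ B *ᵥ Pi.single z 1 = δ • Pi.single z 1 := by
  rw [mulVec_sub, mulVec_smul, mulVec_smul, hj] at hw
  have hεδ : ε = δ := by
    have hcoord : 3 * B j z - 2 * (ε : ℤ) = -(δ * 2) := by
      simpa [hzj.symm, Units.smul_def] using congrFun hw j
    have hε := Int.isUnit_iff.mp ε.isUnit
    have hδ := Int.isUnit_iff.mp δ.isUnit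
    exact Units.ext (by omega)
  subst hεδ
  rw [smul_sub, smul_comm ε (2 : ℤ), sub_left_inj, smul_comm ε (3 : ℤ)] at hw
  exact ⟨rfl, smul_right_injective _ (three_ne_zero (α := ℤ)) hw⟩

theorem Matrix.eq_smul_one_of_forall_mulVec_single {ι R : Type*} [Fintype ι] [DecidableEq ι]
    [Semiring R] {B : Matrix ι ι R} {c : R}
    (h : ∀ k, B *ᵥ Pi.single k 1 = c • Pi.single k 1) : B = c • 1 :=
  ext_of_mulVec_single fun k => by rw [h, smul_mulVec, one_mulVec]

section

variable {n : ℕ} {z i : Fin n}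

theorem alphaMat_eq_transvection_mul (h : i ≠ z) :
    alphaMat n z i = transvection i z 2 * transvection z i 1 := by
  ext a b
  simp only [transvection, mul_add, add_mul, one_mul, mul_one, single_mul_single_same]
  simp only [alphaMat, of_apply, Matrix.add_apply, one_apply, single_apply]
  grind

theorem sigMat_eq_transvection_mul (h : i ≠ z) :
    sigMat n z i = transvection i z (-1) * transvection z i 1 * transvection i z (-1) := by
  ext a b
  simp only [transvection, mul_add, add_mul, one_mul, mul_one, single_mul_single_same,
    single_mul_single_of_ne _ _ _ _ h.symm]
  simp only [sigMat, of_apply, add_zero, mul_neg, mul_one, neg_neg, Matrix.add_apply, one_apply,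
    single_apply]
  grind

theorem det_alphaMat (h : i ≠ z) : (alphaMat n z i).det = 1 := by
  simp [alphaMat_eq_transvection_mul h, det_transvection_of_ne _ _ h,
    det_transvection_of_ne _ _ h.symm]

theorem det_sigMat (h : i ≠ z) : (sigMat n z i).det = 1 := by
  simp [sigMat_eq_transvection_mul h, det_transvection_of_ne _ _ h,
    det_transvection_of_ne _ _ h.symm]

theorem alphaMat_mulVec (h : i ≠ z) :
    alphaMat n z i *ᵥ ((3 : ℤ) • Pi.single z 1 - (2 : ℤ) • Pi.single i 1) = Pi.single z 1 := by
  rw [mulVec_sub, mulVec_smul, mulVec_smul, mulVec_single_one, mulVec_single_one]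
  ext k
  simp only [alphaMat, zsmul_eq_mul, Int.cast_ofNat, Pi.sub_apply, Pi.mul_apply, Pi.ofNat_apply,
    col_apply, of_apply, and_true, mul_ite, mul_one, Int.reduceMul, mul_zero, Pi.single_apply]
  grind

theorem mulVec_single_eq_of_conj_alphaMat {B : Matrix (Fin n) (Fin n) ℤ} (h : i ≠ z) {ε δ : ℤˣ}
    (hε : B *ᵥ Pi.single i 1 = ε • Pi.single i 1)
    (hδ : (alphaMat n z i * B * (alphaMat n z i)⁻¹) *ᵥ Pi.single z 1 = δ • Pi.single z 1) :
    ε = δ ∧ B *ᵥ Pi.single z 1 = δ • Pi.single z 1 := by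
  have hα : IsUnit (alphaMat n z i).det := by rw [det_alphaMat h]; exact isUnit_one
  have hinv : (alphaMat n z i)⁻¹ *ᵥ Pi.single z 1 =
      (3 : ℤ) • Pi.single z 1 - (2 : ℤ) • Pi.single i 1 := by
    calc (alphaMat n z i)⁻¹ *ᵥ Pi.single z 1
        = (alphaMat n z i)⁻¹ *ᵥ (alphaMat n z i *ᵥ
            ((3 : ℤ) • Pi.single z 1 - (2 : ℤ) • Pi.single i 1)) := by rw [alphaMat_mulVec h]
      _ = _ := by rw [mulVec_mulVec, nonsing_inv_mul _ hα, one_mulVec]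
  have hw := mulVec_inv_mulVec_eq_smul_of_conj hα (c := (δ : ℤ)) (by rwa [← Units.smul_def])
  rw [hinv, ← Units.smul_def] at hw
  exact mulVec_single_eq_of_mulVec_three_smul_sub_two_smul h.symm hε hw

end

/-- if `A ∈ GL(n,ℤ)` satisfies `A e_i = ±e_i` for all `i ≠ 0` and
`α_j A α_j⁻¹ e₁ = ±e₁` for all `j ≠ 0`, then `A = ±I`.  (The matrices `σ_i` and
`α_i` all lie in `SL(n,ℤ)`.) -/
theorem stmt_1 (n : ℕ) (hn : 3 ≤ n) (A : Matrix.GeneralLinearGroup (Fin n) ℤ)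
    (z : Fin n) (hz : z = ⟨0, by omega⟩)
    (e : Fin n → Fin n → ℤ) (he : e = fun i j => if j = i then 1 else 0)
    (hA : ∀ i : Fin n, i ≠ z →
      A.1.mulVec (e i) = e i ∨ A.1.mulVec (e i) = -(e i))
    (hconj : ∀ j : Fin n, j ≠ z →
      (alphaMat n z j * A.1 * (alphaMat n z j)⁻¹).mulVec (e z) = e z ∨
      (alphaMat n z j * A.1 * (alphaMat n z j)⁻¹).mulVec (e z) = -(e z)) :
    ((∀ i : Fin n, i ≠ z → (sigMat n z i).det = 1 ∧ (alphaMat n z i).det = 1) ∧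
      (A.1 = 1 ∨ A.1 = -1)) := by
  refine ⟨fun i hi => ⟨det_sigMat hi, det_alphaMat hi⟩, ?_⟩
  obtain rfl : e = fun i => Pi.single i 1 := by
    rw [he]; ext i j; simp [Pi.single_apply]
  have hcol : ∀ j ≠ z, ∃ δ : ℤˣ, A.1 *ᵥ Pi.single j 1 = δ • Pi.single j 1 ∧
      A.1 *ᵥ Pi.single z 1 = δ • Pi.single z 1 := by
    intro j hj
    obtain ⟨ε, hε⟩ := exists_units_smul_of_eq_or_eq_neg (hA j hj)
    obtain ⟨δ, hδ⟩ := exists_units_smul_of_eq_or_eq_neg (hconj j hj)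
    obtain ⟨rfl, hεz⟩ := mulVec_single_eq_of_conj_alphaMat hj hε hδ
    exact ⟨ε, hε, hεz⟩
  obtain ⟨δ, -, hδ⟩ := hcol ⟨1, by omega⟩ (by simp [hz, Fin.ext_iff])
  have hAδ : A.1 = (δ : ℤ) • 1 := by
    refine eq_smul_one_of_forall_mulVec_single fun k => ?_
    rw [← Units.smul_def]
    by_cases hk : k = z
    · rw [hk, hδ]
    · obtain ⟨δ', hk', hδ'⟩ := hcol k hk
      obtain rfl : δ' = δ :=
        Units.ext (by simpa [Units.smul_def] using congrFun (hδ'.symm.trans hδ) z)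
      exact hk'
  rcases Int.units_eq_one_or δ with rfl | rfl
  · exact Or.inl (by simpa using hAδ)
  · exact Or.inr (by simpa using hAδ)
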